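/- arXiv:1308.6545 — 7 statements merged into one kernel-verified Lean document; each statement's English description precedes it below -/
import Mathlib

section
/- Let u(x,t) be a smooth function and define the 1-forms ω¹ = cos(u/2)(dx+dt), ω² = sin(u/2)(dx−dt), ω³ = (u_x/2)dx − (u_t/2)dt. Then the structure equations dω¹ = ω³∧ω², dω² = ω¹∧ω³, dω³ = ω¹∧ω² hold if and only if u satisfies the sine-Gordon equation u_{xt} = sin u. -/
open Real

/-- Partial derivative with respect to `x` (first coordinate). -/
noncomputable def pdx (f : ℝ × ℝ → ℝ) (p : ℝ × ℝ) : ℝ := fderiv ℝ f p (1, 0)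

/-- Partial derivative with respect to `t` (second coordinate). -/
noncomputable def pdt (f : ℝ × ℝ → ℝ) (p : ℝ × ℝ) : ℝ := fderiv ℝ f p (0, 1)

/-- Coefficient of `dx ∧ dt` in `d (P dx + Q dt)`. -/
noncomputable def dform (P Q : ℝ × ℝ → ℝ) (p : ℝ × ℝ) : ℝ := pdx Q p - pdt P p

/-- Coefficient of `dx ∧ dt` in `(P₁ dx + Q₁ dt) ∧ (P₂ dx + Q₂ dt)`. -/
def wedge (P₁ Q₁ P₂ Q₂ : ℝ × ℝ → ℝ) (p : ℝ × ℝ) : ℝ := P₁ p * Q₂ p - Q₁ p * P₂ p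

/-- Chain rule for a scalar outer function. -/
lemma fderiv_comp_scalar {p : ℝ × ℝ} (f : ℝ × ℝ → ℝ) (hf : DifferentiableAt ℝ f p)
    (g : ℝ → ℝ) (g' : ℝ) (hg : HasDerivAt g g' (f p)) (v : ℝ × ℝ) :
    fderiv ℝ (fun q => g (f q)) p v = g' * fderiv ℝ f p v := by
  have h := hg.comp_hasFDerivAt p hf.hasFDerivAt
  rw [show (fun q => g (f q)) = g ∘ f from rfl, h.fderiv]
  simp

/-- For `ω¹ = cos(u/2)(dx+dt)`, `ω² = sin(u/2)(dx−dt)`, `ω³ = (u_x/2)dx − (u_t/2)dt`,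
the structure equations hold at a point iff the sine-Gordon equation `u_{xt} = sin u`
holds there. -/
theorem stmt0 (u : ℝ × ℝ → ℝ) (hu : ContDiff ℝ (⊤ : ℕ∞) u) (p : ℝ × ℝ) :
    (dform (fun q => cos (u q / 2)) (fun q => cos (u q / 2)) p
        = wedge (fun q => pdx u q / 2) (fun q => -(pdt u q) / 2)
            (fun q => sin (u q / 2)) (fun q => -(sin (u q / 2))) p ∧
     dform (fun q => sin (u q / 2)) (fun q => -(sin (u q / 2))) p
        = wedge (fun q => cos (u q / 2)) (fun q => cos (u q / 2))
            (fun q => pdx u q / 2) (fun q => -(pdt u q) / 2) p ∧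
     dform (fun q => pdx u q / 2) (fun q => -(pdt u q) / 2) p
        = wedge (fun q => cos (u q / 2)) (fun q => cos (u q / 2))
            (fun q => sin (u q / 2)) (fun q => -(sin (u q / 2))) p)
    ↔ pdt (fun q => pdx u q) p = sin (u p) := by
  have hd : Differentiable ℝ u := hu.differentiable (by simp)
  have hd' : Differentiable ℝ (fderiv ℝ u) :=
    (hu.fderiv_right (m := 1) (by exact WithTop.coe_le_coe.mpr le_top)).differentiable one_ne_zero
  -- derivatives of cos(u/2) and sin(u/2)
  have hcos : HasDerivAt (fun y : ℝ => cos (y / 2)) (-sin (u p / 2) * (1 / 2)) (u p) := by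
    simpa [Function.comp_def] using (Real.hasDerivAt_cos (u p / 2)).comp (u p) ((hasDerivAt_id (u p)).div_const 2)
  have hsin : HasDerivAt (fun y : ℝ => sin (y / 2)) (cos (u p / 2) * (1 / 2)) (u p) := by
    simpa [Function.comp_def] using (Real.hasDerivAt_sin (u p / 2)).comp (u p) ((hasDerivAt_id (u p)).div_const 2)
  have ecos : ∀ v, fderiv ℝ (fun q => cos (u q / 2)) p v
      = -sin (u p / 2) * (1 / 2) * fderiv ℝ u p v :=
    fun v => fderiv_comp_scalar u (hd p) _ _ hcos v
  have esin : ∀ v, fderiv ℝ (fun q => sin (u q / 2)) p v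
      = cos (u p / 2) * (1 / 2) * fderiv ℝ u p v :=
    fun v => fderiv_comp_scalar u (hd p) _ _ hsin v
  -- second derivatives
  have h1 : ∀ v w : ℝ × ℝ, fderiv ℝ (fun q => fderiv ℝ u q v) p w
      = fderiv ℝ (fderiv ℝ u) p w v := by
    intro v w
    rw [fderiv_clm_apply (hd' p) (differentiableAt_const v)]
    simp
  have hsym := second_derivative_symmetric (f := u) (f' := fderiv ℝ u)
    (f'' := fderiv ℝ (fderiv ℝ u) p) (x := p) (fun y => (hd y).hasFDerivAt) (hd' p).hasFDerivAt
  have hfx : ∀ v : ℝ × ℝ, DifferentiableAt ℝ (fun q => fderiv ℝ u q v) p :=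
    fun v => (hd' p).clm_apply (differentiableAt_const v)
  have e3 : ∀ v w : ℝ × ℝ, fderiv ℝ (fun q => fderiv ℝ u q v / 2) p w
      = (1 / 2) * fderiv ℝ (fderiv ℝ u) p w v := by
    intro v w
    rw [fderiv_comp_scalar _ (hfx v) (fun y => y / 2) (1 / 2)
      ((hasDerivAt_id _).div_const 2) w, h1]
  have e4 : ∀ v w : ℝ × ℝ, fderiv ℝ (fun q => -(fderiv ℝ u q v) / 2) p w
      = (-1 / 2) * fderiv ℝ (fderiv ℝ u) p w v := by
    intro v w
    have hg : HasDerivAt (fun y : ℝ => -y / 2) (-1 / 2) (fderiv ℝ u p v) := by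
      simpa using ((hasDerivAt_id (fderiv ℝ u p v)).neg.div_const 2)
    rw [fderiv_comp_scalar _ (hfx v) (fun y => -y / 2) (-1 / 2) hg w, h1]
  have ensin : ∀ v, fderiv ℝ (fun q => -sin (u q / 2)) p v
      = -(cos (u p / 2) * (1 / 2)) * fderiv ℝ u p v := by
    intro v
    exact fderiv_comp_scalar u (hd p) (fun y => -sin (y / 2)) _ hsin.neg v
  have hsin2 : sin (u p) = 2 * sin (u p / 2) * cos (u p / 2) := by
    have h2 := Real.sin_two_mul (u p / 2)
    rw [show 2 * (u p / 2) = u p by ring] at h2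
    exact h2
  simp only [dform, wedge, pdx, pdt, ecos, esin, ensin, e3, e4, h1]
  rw [hsym (0, 1) (1, 0)]
  constructor
  · rintro ⟨_, _, h3⟩
    nlinarith [h3, hsin2]
  · intro h
    refine ⟨by ring, by ring, by nlinarith [h, hsin2]⟩
end

section
/- Let u(x,t) be a smooth function, η a nonzero real parameter, and define ω¹ = (1/η) sin(u) dt, ω² = η dx + (1/η) cos(u) dt, ω³ = u_x dx. Then the structure equations dω¹ = ω³∧ω², dω² = ω¹∧ω³, dω³ = ω¹∧ω² hold if and only if u_{xt} = sin u. -/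
open Real

/-- For `ω¹ = (1/η) sin u dt`, `ω² = η dx + (1/η) cos u dt`, `ω³ = u_x dx`, the structure
equations hold at a point iff the sine-Gordon equation `u_{xt} = sin u` holds there. -/
theorem stmt1 (u : ℝ × ℝ → ℝ) (hu : ContDiff ℝ (⊤ : ℕ∞) u) (η : ℝ) (hη : η ≠ 0) (p : ℝ × ℝ) :
    (dform (fun _ => (0 : ℝ)) (fun q => (1/η) * sin (u q)) p
        = wedge (fun q => pdx u q) (fun _ => (0 : ℝ))
            (fun _ => η) (fun q => (1/η) * cos (u q)) p ∧
     dform (fun _ => η) (fun q => (1/η) * cos (u q)) p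
        = wedge (fun _ => (0 : ℝ)) (fun q => (1/η) * sin (u q))
            (fun q => pdx u q) (fun _ => (0 : ℝ)) p ∧
     dform (fun q => pdx u q) (fun _ => (0 : ℝ)) p
        = wedge (fun _ => (0 : ℝ)) (fun q => (1/η) * sin (u q))
            (fun _ => η) (fun q => (1/η) * cos (u q)) p)
    ↔ pdt (fun q => pdx u q) p = sin (u p) := by
  have hud : DifferentiableAt ℝ u p := (hu.differentiable (by simp)) p
  have hsin : HasFDerivAt (fun q => (1/η) * sin (u q))
      ((1/η) • (cos (u p) • fderiv ℝ u p)) p :=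
    ((Real.hasDerivAt_sin (u p)).comp_hasFDerivAt p hud.hasFDerivAt).const_mul _
  have hcos : HasFDerivAt (fun q => (1/η) * cos (u q))
      ((1/η) • ((-sin (u p)) • fderiv ℝ u p)) p :=
    ((Real.hasDerivAt_cos (u p)).comp_hasFDerivAt p hud.hasFDerivAt).const_mul _
  have h0 : ∀ (c : ℝ) (v : ℝ × ℝ), fderiv ℝ (fun _ : ℝ × ℝ => c) p v = 0 := by
    intro c v; simp
  simp only [dform, wedge, pdx, pdt, hsin.fderiv, hcos.fderiv, h0,
    ContinuousLinearMap.smul_apply, smul_eq_mul]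
  constructor
  · rintro ⟨-, -, h3⟩
    have : (0:ℝ) - fderiv ℝ (fun q => fderiv ℝ u q (1,0)) p (0,1)
        = 0 * ((1/η) * cos (u p)) - (1/η) * sin (u p) * η := h3
    field_simp at this
    linarith [mul_right_cancel₀ hη (this.trans (by ring : 0 * cos (u p) - η * sin (u p) = -sin (u p) * η))]
  · intro h
    refine ⟨by ring, by ring, ?_⟩
    rw [show fderiv ℝ (fun q => fderiv ℝ u q (1,0)) p (0,1) = sin (u p) from h]
    field_simp
    ring
end

section
/- For the sine-Gordon equation with 1-forms ω¹ = cos(u/2)(dx+dt), ω² = sin(u/2)(dx−dt), ω³ = (u_x/2)dx − (u_t/2)dt, the forms ω³₁ = sin(u/2)(dx+dt) = tan(u/2)·ω¹ and ω³₂ = −cos(u/2)(dx−dt) = −cot(u/2)·ω² satisfy the Codazzi equations dω³₁ = −ω³₂∧ω³ (with ω²₁ = ω³) and dω³₂ = ω³₁∧ω³, and the Gauss equation holds: the coefficients a = tan(u/2), b = 0, c = −cot(u/2) satisfy ac − b² = −1, provided u is a solution of u_{xt} = sin u with sin(u/2)cos(u/2) ≠ 0. -/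
open Real

lemma fderiv_sin_half (u : ℝ × ℝ → ℝ) (p : ℝ × ℝ) (hd : DifferentiableAt ℝ u p)
    (v : ℝ × ℝ) :
    fderiv ℝ (fun q => sin (u q / 2)) p v = cos (u p / 2) * (fderiv ℝ u p v / 2) := by
  have h1 : HasFDerivAt (fun q => u q / 2) ((1/2 : ℝ) • fderiv ℝ u p) p := by
    simpa [div_eq_inv_mul, one_div, Pi.smul_def, smul_eq_mul] using hd.hasFDerivAt.const_smul ((2:ℝ)⁻¹)
  have h2 := (Real.hasDerivAt_sin (u p / 2)).comp_hasFDerivAt p h1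
  rw [show (fun q => Real.sin (u q / 2)) = (Real.sin ∘ fun q => u q / 2) from rfl, h2.fderiv]
  simp only [ContinuousLinearMap.coe_smul', Pi.smul_apply, smul_eq_mul]
  ring

lemma fderiv_cos_half (u : ℝ × ℝ → ℝ) (p : ℝ × ℝ) (hd : DifferentiableAt ℝ u p)
    (v : ℝ × ℝ) :
    fderiv ℝ (fun q => cos (u q / 2)) p v = -sin (u p / 2) * (fderiv ℝ u p v / 2) := by
  have h1 : HasFDerivAt (fun q => u q / 2) ((1/2 : ℝ) • fderiv ℝ u p) p := by
    simpa [div_eq_inv_mul, one_div, Pi.smul_def, smul_eq_mul] using hd.hasFDerivAt.const_smul ((2:ℝ)⁻¹)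
  have h2 := (Real.hasDerivAt_cos (u p / 2)).comp_hasFDerivAt p h1
  rw [show (fun q => Real.cos (u q / 2)) = (Real.cos ∘ fun q => u q / 2) from rfl, h2.fderiv]
  simp only [ContinuousLinearMap.coe_smul', Pi.smul_apply, smul_eq_mul]
  ring


/-- Codazzi and Gauss equations for the sine-Gordon immersion: with
`ω³₁ = sin(u/2)(dx+dt)`, `ω³₂ = −cos(u/2)(dx−dt)`, `ω²₁ = ω³ = (u_x/2)dx − (u_t/2)dt`,
`a = tan(u/2)`, `b = 0`, `c = −cot(u/2)`, for any solution of `u_{xt} = sin u` with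
`sin(u/2)cos(u/2) ≠ 0`. -/
theorem stmt2 (u : ℝ × ℝ → ℝ) (hu : ContDiff ℝ (⊤ : ℕ∞) u)
    (hSG : ∀ q : ℝ × ℝ, pdt (fun r => pdx u r) q = sin (u q))
    (p : ℝ × ℝ) (hsin : sin (u p / 2) ≠ 0) (hcos : cos (u p / 2) ≠ 0) :
    -- tan(u/2)·ω¹ and −cot(u/2)·ω² decompositions
    (sin (u p / 2) = tan (u p / 2) * cos (u p / 2) ∧
     -(cos (u p / 2)) = -(cot (u p / 2)) * sin (u p / 2)) ∧
    -- Codazzi: dω³₁ = −ω³₂ ∧ ω²₁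
    dform (fun q => sin (u q / 2)) (fun q => sin (u q / 2)) p
      = -(wedge (fun q => -(cos (u q / 2))) (fun q => cos (u q / 2))
          (fun q => pdx u q / 2) (fun q => -(pdt u q) / 2) p) ∧
    -- Codazzi: dω³₂ = −ω³₁ ∧ ω¹₂ = ω³₁ ∧ ω³
    dform (fun q => -(cos (u q / 2))) (fun q => cos (u q / 2)) p
      = wedge (fun q => sin (u q / 2)) (fun q => sin (u q / 2))
          (fun q => pdx u q / 2) (fun q => -(pdt u q) / 2) p ∧
    -- Gauss equation: ac − b² = −1 with a = tan(u/2), b = 0, c = −cot(u/2)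
    tan (u p / 2) * (-(cot (u p / 2))) - (0 : ℝ) ^ 2 = -1 := by
  have hd : DifferentiableAt ℝ u p := (hu.differentiable (by simp)) p
  have hs10 := fderiv_sin_half u p hd (1,0)
  have hs01 := fderiv_sin_half u p hd (0,1)
  have hc10 := fderiv_cos_half u p hd (1,0)
  have hc01 := fderiv_cos_half u p hd (0,1)
  refine ⟨⟨?_, ?_⟩, ?_, ?_, ?_⟩
  · rw [Real.tan_eq_sin_div_cos]; field_simp
  · rw [Real.cot_eq_cos_div_sin]; field_simp
  · simp only [dform, wedge, pdx, pdt] at *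
    rw [hs10, hs01]; ring
  · simp only [dform, wedge, pdx, pdt] at *
    have : fderiv ℝ (fun q => -(cos (u q / 2))) p (0,1)
        = -(fderiv ℝ (fun q => cos (u q / 2)) p (0,1)) := by
      rw [fderiv_fun_neg]; simp
    rw [hc10, this, hc01]; ring
  · rw [Real.tan_eq_sin_div_cos, Real.cot_eq_cos_div_sin]; field_simp; ring
end

section
/- Let η, λ ∈ ℝ with η ≠ 0, and let γ, l ∈ ℝ with l > 0 and l² > 4γ². On the strip where log√((l−√(l²−4γ²))/(2γ²)) < ηx+λt < log√((l+√(l²−4γ²))/(2γ²)), the functions a(x,t) = √(l·e^{2(ηx+λt)} − γ²e^{4(ηx+λt)} − 1), b(x,t) = γ e^{2(ηx+λt)}, c(x,t) = (γ²e^{4(ηx+λt)} − 1)/a(x,t) satisfy: (i) the Gauss equation ac − b² = −1; (ii) a_x = η(a−c), a_t = λ(a−c); (iii) b_x = 2ηb, b_t = 2λb; (iv) η b_t − λ b_x = 0 and η c_t − λ c_x = 0. -/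
open Real

lemma comp_pd (η lam d : ℝ) (g : ℝ → ℝ) (p : ℝ × ℝ)
    (hg : HasDerivAt g d (η * p.1 + lam * p.2)) :
    pdx (fun q => g (η * q.1 + lam * q.2)) p = η * d ∧
    pdt (fun q => g (η * q.1 + lam * q.2)) p = lam * d := by
  have hU : HasFDerivAt (fun q : ℝ × ℝ => η * q.1 + lam * q.2)
      (η • ContinuousLinearMap.fst ℝ ℝ ℝ + lam • ContinuousLinearMap.snd ℝ ℝ ℝ) p :=
    (hasFDerivAt_fst.const_mul η).add (hasFDerivAt_snd.const_mul lam)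
  have hF : HasFDerivAt (fun q : ℝ × ℝ => g (η * q.1 + lam * q.2))
      (d • (η • ContinuousLinearMap.fst ℝ ℝ ℝ + lam • ContinuousLinearMap.snd ℝ ℝ ℝ)) p :=
    hg.comp_hasFDerivAt p hU
  constructor
  · rw [pdx, hF.fderiv]; simp; ring
  · rw [pdt, hF.fderiv]; simp; ring

/-- The universal coefficients `a, b, c` on the strip satisfy the Gauss equation and
the stated system of PDEs. -/
theorem stmt7 (η lam γ l : ℝ) (hη : η ≠ 0) (hγ : γ ≠ 0) (hl : 0 < l)
    (hl2 : l ^ 2 > 4 * γ ^ 2)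
    (a b c : ℝ × ℝ → ℝ)
    (ha : a = fun p => Real.sqrt (l * Real.exp (2 * (η * p.1 + lam * p.2))
        - γ ^ 2 * Real.exp (4 * (η * p.1 + lam * p.2)) - 1))
    (hb : b = fun p => γ * Real.exp (2 * (η * p.1 + lam * p.2)))
    (hc : c = fun p => (γ ^ 2 * Real.exp (4 * (η * p.1 + lam * p.2)) - 1) / a p)
    (p : ℝ × ℝ)
    (hstrip₁ : Real.log (Real.sqrt ((l - Real.sqrt (l ^ 2 - 4 * γ ^ 2)) / (2 * γ ^ 2)))
        < η * p.1 + lam * p.2)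
    (hstrip₂ : η * p.1 + lam * p.2
        < Real.log (Real.sqrt ((l + Real.sqrt (l ^ 2 - 4 * γ ^ 2)) / (2 * γ ^ 2)))) :
    a p * c p - (b p) ^ 2 = -1 ∧
    pdx a p = η * (a p - c p) ∧ pdt a p = lam * (a p - c p) ∧
    pdx b p = 2 * η * b p ∧ pdt b p = 2 * lam * b p ∧
    η * pdt b p - lam * pdx b p = 0 ∧ η * pdt c p - lam * pdx c p = 0 := by
  have hγ2 : (0:ℝ) < γ ^ 2 := by positivity
  obtain ⟨u₀, hu₀⟩ : ∃ u, η * p.1 + lam * p.2 = u := ⟨_, rfl⟩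
  rw [hu₀] at hstrip₁ hstrip₂
  -- the square root s of the discriminant
  have hs0 : 0 ≤ Real.sqrt (l ^ 2 - 4 * γ ^ 2) := Real.sqrt_nonneg _
  have hssq : Real.sqrt (l ^ 2 - 4 * γ ^ 2) ^ 2 = l ^ 2 - 4 * γ ^ 2 :=
    Real.sq_sqrt (by linarith)
  have hsl : Real.sqrt (l ^ 2 - 4 * γ ^ 2) < l := (Real.sqrt_lt' hl).2 (by nlinarith)
  obtain ⟨s, hs⟩ : ∃ s, Real.sqrt (l ^ 2 - 4 * γ ^ 2) = s := ⟨_, rfl⟩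
  rw [hs] at hs0 hssq hsl hstrip₁ hstrip₂
  -- positivity of the radicand
  have hy4 : Real.exp (4 * u₀) = Real.exp (2 * u₀) ^ 2 := by
    rw [sq, ← Real.exp_add]; ring_nf
  have hyexp : Real.exp u₀ ^ 2 = Real.exp (2 * u₀) := by
    rw [sq, ← Real.exp_add]; ring_nf
  have hr1' : l - s < 2 * γ ^ 2 * Real.exp (2 * u₀) := by
    have h1 : 0 < (l - s) / (2 * γ ^ 2) := div_pos (by linarith) (by positivity)
    have h2 : Real.sqrt ((l - s) / (2 * γ ^ 2)) < Real.exp u₀ :=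
      (Real.exp_log (Real.sqrt_pos.2 h1)) ▸ Real.exp_lt_exp.2 hstrip₁
    have h3 := Real.sq_sqrt h1.le
    have h4 : (l - s) / (2 * γ ^ 2) < Real.exp (2 * u₀) := by
      rw [← hyexp]
      nlinarith [Real.sqrt_nonneg ((l - s) / (2 * γ ^ 2)), Real.exp_pos u₀]
    rw [div_lt_iff₀ (by positivity)] at h4
    linarith [h4]
  have hr2' : 2 * γ ^ 2 * Real.exp (2 * u₀) < l + s := by
    have h1 : 0 < (l + s) / (2 * γ ^ 2) := div_pos (by linarith) (by positivity)
    have h2 : Real.exp u₀ < Real.sqrt ((l + s) / (2 * γ ^ 2)) :=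
      (Real.exp_log (Real.sqrt_pos.2 h1)) ▸ Real.exp_lt_exp.2 hstrip₂
    have h3 := Real.sq_sqrt h1.le
    have h4 : Real.exp (2 * u₀) < (l + s) / (2 * γ ^ 2) := by
      rw [← hyexp]
      nlinarith [Real.sqrt_nonneg ((l + s) / (2 * γ ^ 2)), Real.exp_pos u₀]
    rw [lt_div_iff₀ (by positivity)] at h4
    linarith [h4]
  have hF : 0 < l * Real.exp (2 * u₀) - γ ^ 2 * Real.exp (4 * u₀) - 1 := by
    rw [hy4]
    nlinarith [mul_pos (sub_pos.2 hr1') (sub_pos.2 hr2'), Real.exp_pos (2 * u₀)]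
  have hFne : l * Real.exp (2 * u₀) - γ ^ 2 * Real.exp (4 * u₀) - 1 ≠ 0 := ne_of_gt hF
  have hApos : 0 < Real.sqrt (l * Real.exp (2 * u₀) - γ ^ 2 * Real.exp (4 * u₀) - 1) :=
    Real.sqrt_pos.2 hF
  have hAsq : Real.sqrt (l * Real.exp (2 * u₀) - γ ^ 2 * Real.exp (4 * u₀) - 1) ^ 2
      = l * Real.exp (2 * u₀) - γ ^ 2 * Real.exp (4 * u₀) - 1 := Real.sq_sqrt hF.le
  -- one-variable derivatives
  have h2e : HasDerivAt (fun u : ℝ => Real.exp (2 * u)) (Real.exp (2 * u₀) * 2) u₀ := by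
    simpa using ((hasDerivAt_id u₀).const_mul 2).exp
  have h4e : HasDerivAt (fun u : ℝ => Real.exp (4 * u)) (Real.exp (4 * u₀) * 4) u₀ := by
    simpa using ((hasDerivAt_id u₀).const_mul 4).exp
  have hgF : HasDerivAt (fun u : ℝ => l * Real.exp (2 * u) - γ ^ 2 * Real.exp (4 * u) - 1)
      (l * (Real.exp (2 * u₀) * 2) - γ ^ 2 * (Real.exp (4 * u₀) * 4)) u₀ :=
    ((h2e.const_mul l).sub (h4e.const_mul (γ ^ 2))).sub_const 1
  have hgA : HasDerivAt
      (fun u : ℝ => Real.sqrt (l * Real.exp (2 * u) - γ ^ 2 * Real.exp (4 * u) - 1))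
      ((l * (Real.exp (2 * u₀) * 2) - γ ^ 2 * (Real.exp (4 * u₀) * 4)) /
        (2 * Real.sqrt (l * Real.exp (2 * u₀) - γ ^ 2 * Real.exp (4 * u₀) - 1))) u₀ :=
    hgF.sqrt hFne
  have hgB : HasDerivAt (fun u : ℝ => γ * Real.exp (2 * u)) (γ * (Real.exp (2 * u₀) * 2)) u₀ :=
    h2e.const_mul γ
  have hgN : HasDerivAt (fun u : ℝ => γ ^ 2 * Real.exp (4 * u) - 1)
      (γ ^ 2 * (Real.exp (4 * u₀) * 4)) u₀ := (h4e.const_mul (γ ^ 2)).sub_const 1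
  obtain ⟨dc, hgC⟩ : ∃ d, HasDerivAt (fun u : ℝ => (γ ^ 2 * Real.exp (4 * u) - 1) /
      Real.sqrt (l * Real.exp (2 * u) - γ ^ 2 * Real.exp (4 * u) - 1)) d u₀ :=
    ⟨_, hgN.div hgA (ne_of_gt hApos)⟩
  -- pointwise values
  have hap : a p = Real.sqrt (l * Real.exp (2 * u₀) - γ ^ 2 * Real.exp (4 * u₀) - 1) := by
    rw [ha]; simp only [hu₀]
  have hbp : b p = γ * Real.exp (2 * u₀) := by rw [hb]; simp only [hu₀]
  have hcp : c p = (γ ^ 2 * Real.exp (4 * u₀) - 1) /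
      Real.sqrt (l * Real.exp (2 * u₀) - γ ^ 2 * Real.exp (4 * u₀) - 1) := by
    rw [hc]; simp only [hu₀, hap]
  -- identify the functions with one-variable compositions
  have haeq : a = fun q : ℝ × ℝ => (fun u : ℝ =>
      Real.sqrt (l * Real.exp (2 * u) - γ ^ 2 * Real.exp (4 * u) - 1)) (η * q.1 + lam * q.2) :=
    ha
  have hbeq : b = fun q : ℝ × ℝ => (fun u : ℝ =>
      γ * Real.exp (2 * u)) (η * q.1 + lam * q.2) := hb
  have hceq : c = fun q : ℝ × ℝ => (fun u : ℝ => (γ ^ 2 * Real.exp (4 * u) - 1) /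
      Real.sqrt (l * Real.exp (2 * u) - γ ^ 2 * Real.exp (4 * u) - 1)) (η * q.1 + lam * q.2) := by
    funext q; rw [hc, ha]
  rw [← hu₀] at hgA hgB hgC
  have hpa := comp_pd η lam _ _ p hgA
  have hpb := comp_pd η lam _ _ p hgB
  have hpc := comp_pd η lam _ _ p hgC
  rw [← haeq, hu₀] at hpa
  rw [← hbeq, hu₀] at hpb
  rw [← hceq] at hpc
  clear h2e h4e hgF hgA hgB hgN hgC haeq hbeq hceq ha hb hc hstrip₁ hstrip₂ hs hsl hssq hs0 hr1' hr2' hyexp hu₀ hFne hF hγ2 hη hγ hl hl2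
  have key : (l * (Real.exp (2 * u₀) * 2) - γ ^ 2 * (Real.exp (4 * u₀) * 4)) /
      (2 * Real.sqrt (l * Real.exp (2 * u₀) - γ ^ 2 * Real.exp (4 * u₀) - 1))
      = Real.sqrt (l * Real.exp (2 * u₀) - γ ^ 2 * Real.exp (4 * u₀) - 1)
        - (γ ^ 2 * Real.exp (4 * u₀) - 1) /
          Real.sqrt (l * Real.exp (2 * u₀) - γ ^ 2 * Real.exp (4 * u₀) - 1) := by
    set A := Real.sqrt (l * Real.exp (2 * u₀) - γ ^ 2 * Real.exp (4 * u₀) - 1) with hAdef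
    have hA0 : A ≠ 0 := ne_of_gt hApos
    rw [eq_sub_iff_add_eq, div_add_div _ _ (mul_ne_zero two_ne_zero hA0) hA0,
      div_eq_iff (mul_ne_zero (mul_ne_zero two_ne_zero hA0) hA0)]
    linear_combination (-2 * A) * hAsq
  refine ⟨?_, ?_, ?_, ?_, ?_, ?_, ?_⟩
  · rw [hcp, hbp, hap, mul_comm, div_mul_cancel₀ _ (ne_of_gt hApos), hy4]
    ring
  · rw [hpa.1, hap, hcp, key]
  · rw [hpa.2, hap, hcp, key]
  · rw [hpb.1, hbp]; ring
  · rw [hpb.2, hbp]; ring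
  · rw [hpb.1, hpb.2]; ring
  · rw [hpc.1, hpc.2]; ring
end

section
/- Suppose a, b, c: ℝ² → ℝ are differentiable functions of (x,t) satisfying a_x = η(a−c), b_x = 2ηb, a_t = λ(a−c), b_t = 2λb for constants η ≠ 0, λ, together with the Gauss equation ac − b² = −1 with a nowhere vanishing. Then there exist constants γ, l such that b = γe^{2(ηx+λt)} and a² = l·e^{2(ηx+λt)} − γ²e^{4(ηx+λt)} − 1. -/
open Real

lemma key (k m : ℝ) (f : ℝ × ℝ → ℝ) (hf : Differentiable ℝ f)
    (hx : ∀ p, pdx f p = k * f p) (ht : ∀ p, pdt f p = m * f p) :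
    ∃ C, ∀ p, f p = C * Real.exp (k * p.1 + m * p.2) := by
  set L : ℝ × ℝ →L[ℝ] ℝ :=
    k • (ContinuousLinearMap.fst ℝ ℝ ℝ) + m • (ContinuousLinearMap.snd ℝ ℝ ℝ) with hLdef
  have hLval : ∀ p : ℝ × ℝ, L p = k * p.1 + m * p.2 := by intro p; simp [hLdef]
  set u : ℝ × ℝ → ℝ := fun p => Real.exp (-(L p)) with hudef
  have hu : ∀ p : ℝ × ℝ, HasFDerivAt u (u p • (-L)) p := by
    intro p
    exact (Real.hasDerivAt_exp (-(L p))).comp_hasFDerivAt p (L.hasFDerivAt.neg)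
  set g : ℝ × ℝ → ℝ := fun p => f p * u p with hgdef
  have hg : ∀ p : ℝ × ℝ, HasFDerivAt g
      (f p • (u p • (-L)) + u p • (fderiv ℝ f p)) p := by
    intro p
    exact ((hf p).hasFDerivAt).mul (hu p)
  have hg0 : ∀ p : ℝ × ℝ, fderiv ℝ g p = 0 := by
    intro p
    rw [(hg p).fderiv]
    refine ContinuousLinearMap.ext fun v => ?_
    have hv : v = v.1 • ((1 : ℝ), (0 : ℝ)) + v.2 • ((0 : ℝ), (1 : ℝ)) := by
      ext <;> simp
    rw [hv]
    simp only [map_add, map_smul, ContinuousLinearMap.add_apply,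
      ContinuousLinearMap.smul_apply, ContinuousLinearMap.neg_apply,
      ContinuousLinearMap.zero_apply, smul_eq_mul]
    have h1 := hx p; have h2 := ht p
    rw [pdx] at h1; rw [pdt] at h2
    rw [h1, h2, hLval, hLval]
    ring
  have hgd : Differentiable ℝ g := fun p => (hg p).differentiableAt
  have hconst : ∀ p : ℝ × ℝ, g p = g 0 :=
    fun p => is_const_of_fderiv_eq_zero hgd hg0 p 0
  refine ⟨g 0, fun p => ?_⟩
  have := hconst p
  have hne : u p ≠ 0 := Real.exp_ne_zero _
  have hup : u p * Real.exp (k * p.1 + m * p.2) = 1 := by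
    rw [hudef]
    simp only []
    rw [← Real.exp_add, hLval]
    norm_num
  have : f p * u p * Real.exp (k * p.1 + m * p.2)
      = g 0 * Real.exp (k * p.1 + m * p.2) := by rw [← this]
  rw [mul_assoc, hup, mul_one] at this
  exact this

/-- Differentiable `a, b, c` satisfying the PDE system, the Gauss equation and `a ≠ 0`
must have `b = γe^{2(ηx+λt)}` and `a² = l·e^{2(ηx+λt)} − γ²e^{4(ηx+λt)} − 1` for some
constants `γ, l`. -/
theorem stmt9 (η lam : ℝ) (hη : η ≠ 0) (a b c : ℝ × ℝ → ℝ)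
    (hda : Differentiable ℝ a) (hdb : Differentiable ℝ b) (hdc : Differentiable ℝ c)
    (hax : ∀ p, pdx a p = η * (a p - c p))
    (hbx : ∀ p, pdx b p = 2 * η * b p)
    (hat : ∀ p, pdt a p = lam * (a p - c p))
    (hbt : ∀ p, pdt b p = 2 * lam * b p)
    (hGauss : ∀ p, a p * c p - (b p) ^ 2 = -1)
    (ha0 : ∀ p, a p ≠ 0) :
    ∃ γ l : ℝ, ∀ p : ℝ × ℝ,
      b p = γ * Real.exp (2 * (η * p.1 + lam * p.2)) ∧
      (a p) ^ 2 = l * Real.exp (2 * (η * p.1 + lam * p.2))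
          - γ ^ 2 * Real.exp (4 * (η * p.1 + lam * p.2)) - 1 := by
  obtain ⟨γ, hγ⟩ := key (2 * η) (2 * lam) b hdb
    (fun p => by rw [hbx p]) (fun p => by rw [hbt p])
  set F : ℝ × ℝ → ℝ := fun p => a p * a p + b p * b p + 1 with hFdef
  have hdF : Differentiable ℝ F := ((hda.mul hda).add (hdb.mul hdb)).add_const 1
  have hFderiv : ∀ (p : ℝ × ℝ) (v : ℝ × ℝ), fderiv ℝ F p v =
      a p * (fderiv ℝ a p v) + (fderiv ℝ a p v) * a p +
      (b p * (fderiv ℝ b p v) + (fderiv ℝ b p v) * b p) := by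
    intro p v
    have h : HasFDerivAt F
        ((a p • fderiv ℝ a p + a p • fderiv ℝ a p) +
         (b p • fderiv ℝ b p + b p • fderiv ℝ b p)) p :=
      (((hda p).hasFDerivAt.mul (hda p).hasFDerivAt).add
        ((hdb p).hasFDerivAt.mul (hdb p).hasFDerivAt)).add_const 1
    rw [h.fderiv]
    simp only [ContinuousLinearMap.add_apply, ContinuousLinearMap.smul_apply, smul_eq_mul]
    ring
  have hFx : ∀ p, pdx F p = 2 * η * F p := by
    intro p
    have h1 := hax p; have h2 := hbx p; have h3 := hGauss p
    rw [pdx] at h1 h2 ⊢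
    rw [hFderiv p (1, 0), h1, h2, hFdef]
    linear_combination (-2 * η) * h3
  have hFt : ∀ p, pdt F p = 2 * lam * F p := by
    intro p
    have h1 := hat p; have h2 := hbt p; have h3 := hGauss p
    rw [pdt] at h1 h2 ⊢
    rw [hFderiv p (0, 1), h1, h2, hFdef]
    linear_combination (-2 * lam) * h3
  obtain ⟨l, hl⟩ := key (2 * η) (2 * lam) F hdF hFx hFt
  refine ⟨γ, l, fun p => ?_⟩
  have hb := hγ p
  have hF := hl p
  have he : 2 * η * p.1 + 2 * lam * p.2 = 2 * (η * p.1 + lam * p.2) := by ring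
  rw [he] at hb hF
  refine ⟨hb, ?_⟩
  have hsq : Real.exp (2 * (η * p.1 + lam * p.2)) * Real.exp (2 * (η * p.1 + lam * p.2))
      = Real.exp (4 * (η * p.1 + lam * p.2)) := by
    rw [← Real.exp_add]; ring_nf
  have : a p * a p + b p * b p + 1 = l * Real.exp (2 * (η * p.1 + lam * p.2)) := hF
  rw [hb] at this
  nlinarith [this, hsq]
end

section
/- Let η ≠ 0, λ ≠ 0, T ≠ 0, ξ, τ be real constants and u(x,t) smooth. Define f₁₁ = ηTu_x/λ, f₂₁ = η, f₃₁ = ηTu_x/λ, f₁₂ = Tu + τT/λ, f₂₂ = λ/η − ξ, f₃₂ = Tu + τT/λ, and ωⁱ = f_{i1}dx + f_{i2}dt for i = 1,2,3 (taking the upper signs in (\ref{fijLin2})). Then dω¹ = ω³∧ω², dω² = ω¹∧ω³ and dω³ = ω¹∧ω² hold if and only if u_{xt} = λu + ξu_x + τ. -/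
open Real

/-- For the linear equation `u_{xt} = λu + ξu_x + τ`, with the 1-forms determined by
`f₁₁ = f₃₁ = ηTu_x/λ`, `f₂₁ = η`, `f₁₂ = f₃₂ = Tu + τT/λ`, `f₂₂ = λ/η − ξ`, the
structure equations hold at a point where `u_x ≠ 0` iff the equation holds there. -/
theorem stmt12 (η lam T xi tau : ℝ) (hη : η ≠ 0) (hlam : lam ≠ 0) (hT : T ≠ 0)
    (u : ℝ × ℝ → ℝ) (hu : ContDiff ℝ (⊤ : ℕ∞) u) (p : ℝ × ℝ) (hux : pdx u p ≠ 0) :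
    (dform (fun q => η * T * pdx u q / lam) (fun q => T * u q + tau * T / lam) p
        = wedge (fun q => η * T * pdx u q / lam) (fun q => T * u q + tau * T / lam)
            (fun _ => η) (fun _ => lam / η - xi) p ∧
     dform (fun _ => η) (fun _ => lam / η - xi) p
        = wedge (fun q => η * T * pdx u q / lam) (fun q => T * u q + tau * T / lam)
            (fun q => η * T * pdx u q / lam) (fun q => T * u q + tau * T / lam) p ∧
     dform (fun q => η * T * pdx u q / lam) (fun q => T * u q + tau * T / lam) p
        = wedge (fun q => η * T * pdx u q / lam) (fun q => T * u q + tau * T / lam)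
            (fun _ => η) (fun _ => lam / η - xi) p)
    ↔ pdt (fun q => pdx u q) p = lam * u p + xi * pdx u p + tau := by
  have hux' : ContDiff ℝ (⊤ : ℕ∞) (fun q => pdx u q) := by
    unfold pdx
    exact (hu.fderiv_right (by simp)).clm_apply contDiff_const
  have hdu : DifferentiableAt ℝ u p := hu.differentiable (by simp) p
  have hdux : DifferentiableAt ℝ (fun q => pdx u q) p := (hux'.differentiable (by simp)) p
  have h1 : pdx (fun q => T * u q + tau * T / lam) p = T * pdx u p := by
    unfold pdx
    rw [fderiv_add_const, fderiv_const_mul hdu T]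
    simp
  have h2 : pdt (fun q => η * T * pdx u q / lam) p
      = η * T / lam * pdt (fun q => pdx u q) p := by
    unfold pdt
    have he : (fun q => η * T * pdx u q / lam) = fun q => (η * T / lam) * pdx u q := by
      funext q; ring
    rw [he, fderiv_const_mul hdux (η * T / lam)]
    simp
  have hkey1 : dform (fun q => η * T * pdx u q / lam) (fun q => T * u q + tau * T / lam) p
      = T * pdx u p - η * T / lam * pdt (fun q => pdx u q) p := by
    unfold dform; rw [h1, h2]
  have hkey2 : wedge (fun q => η * T * pdx u q / lam) (fun q => T * u q + tau * T / lam)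
      (fun _ => η) (fun _ => lam / η - xi) p
      = η * T * pdx u p / lam * (lam / η - xi) - (T * u p + tau * T / lam) * η := rfl
  have hd2 : dform (fun _ : ℝ × ℝ => η) (fun _ => lam / η - xi) p = 0 := by
    unfold dform pdx pdt; simp
  have hw2 : wedge (fun q => η * T * pdx u q / lam) (fun q => T * u q + tau * T / lam)
      (fun q => η * T * pdx u q / lam) (fun q => T * u q + tau * T / lam) p = 0 := by
    unfold wedge; ring
  rw [hkey1, hkey2, hd2, hw2]
  constructor
  · rintro ⟨h, -, -⟩
    have hc : η * T * lam * lam * η ≠ 0 := by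
      simp [hη, hT, hlam]
    apply mul_left_cancel₀ hc
    field_simp at h
    linear_combination (-(η * T * lam ^ 2)) * h
  · intro h
    refine ⟨?_, rfl, ?_⟩ <;> rw [h] <;> field_simp <;> ring
end

section
/- Let δ, ν, γ, β be real constants with δ, ν, γ nonzero, γ ≠ 1, and A, B real with A² − B² = (γ−1)/δ² and B ≠ 0. Define F(z₀,z₁) = νe^{δz₀}√(β+γz₁²) on the set where β+γz₁² > 0, and Δ₁₂ = (f₁₁f₂₂ − ηf₁₂), Δ₂₃, Δ₁₃ from the coefficients in (\ref{fijexp}) (upper signs). Then the identity F·(Δ₂₃,_{z₁}·Δ₁₂ − Δ₁₂,_{z₁}·Δ₂₃) = −f₂₂·(Δ₁₃² + Δ₂₃²) reduces to (B² − A²γ)z₁² − A²β = 0, which cannot hold identically on an open set; hence the identity fails. -/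
set_option maxHeartbeats 1000000


lemma aux18 (δ ν γ β A B η t s q w : ℝ) (hs : 0 < s)
    (hs2 : s^2 = β + γ*t^2) (hAB : (A^2 - B^2)*δ^2 = γ - 1)
    (hq : q*(γ-1) = δ^2) (hw : w*s = γ*t)
    (hδ : δ ≠ 0) (hν : ν ≠ 0)
    (heq : ν*s*( ((A - B*w)*q*ν) * ((η*A*δ - (B*t - A*s)*q)*ν - η*(A*δ*ν))
            - (-((B - A*w)*q)*ν) * (η*(B*δ*ν) - (η*B*δ - (A*t - B*s)*q)*ν) )
      = -ν * ( ((η*A*δ - (B*t - A*s)*q)*(B*δ*ν) - (η*B*δ - (A*t - B*s)*q)*(A*δ*ν))^2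
             + (η*(B*δ*ν) - (η*B*δ - (A*t - B*s)*q)*ν)^2 )) :
    (γ*A^2 - B^2)*t^2 + A^2*β = 0 := by
  have hc : (δ^4*ν^3 : ℝ) ≠ 0 := by positivity
  have h1'' : δ^4*ν^3*(s*(A^2*β + (γ*A^2+B^2)*t^2)) = δ^4*ν^3*(2*A*B*t*(β+γ*t^2)) := by
    linear_combination ((γ-1)^2*s) * heq + ((2)*δ^4*ν^3*A*B*t + (-1)*δ^4*ν^3*A^2*s) * hs2 + ((1)*δ^4*ν^3*B^2*t^2*s + (-1)*δ^4*ν^3*A^2*t^2*s) * hAB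
      - ((2)*ν^3*A*B*t*s^2*q + (-1)*ν^3*A^2*s^3*q + (-1)*ν^3*A^2*t^2*s*q + (-1)*ν^3*γ*B^2*t^2*s*q + (-2)*ν^3*γ*A*B*t*s^2*q + (1)*ν^3*γ*A^2*s^3*q + (2)*ν^3*γ*A^2*t^2*s*q + (1)*ν^3*γ^2*B^2*t^2*s*q + (-1)*ν^3*γ^2*A^2*t^2*s*q + (-1)*δ^2*ν^3*B^4*t^2*s*q + (-2)*δ^2*ν^3*A*B*t*s^2 + (1)*δ^2*ν^3*A^2*s^3 + (1)*δ^2*ν^3*A^2*t^2*s + (2)*δ^2*ν^3*A^2*B^2*t^2*s*q + (-1)*δ^2*ν^3*A^4*t^2*s*q + (1)*δ^2*ν^3*γ*B^2*t^2*s + (1)*δ^2*ν^3*γ*B^4*t^2*s*q + (-1)*δ^2*ν^3*γ*A^2*t^2*s + (-2)*δ^2*ν^3*γ*A^2*B^2*t^2*s*q + (1)*δ^2*ν^3*γ*A^4*t^2*s*q + (1)*δ^4*ν^3*B^4*t^2*s + (-2)*δ^4*ν^3*A^2*B^2*t^2*s + (1)*δ^4*ν^3*A^4*t^2*s) * hq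 - ((1)*ν^3*B^2*t*s*q^2 + (-1)*ν^3*A^2*t*s*q^2 + (-2)*ν^3*γ*B^2*t*s*q^2 + (2)*ν^3*γ*A^2*t*s*q^2 + (1)*ν^3*γ^2*B^2*t*s*q^2 + (-1)*ν^3*γ^2*A^2*t*s*q^2) * hw
  have h1 : s*(A^2*β + (γ*A^2+B^2)*t^2) = 2*A*B*t*(β+γ*t^2) := mul_left_cancel₀ hc h1''
  have h1' : s*(A^2*β + (γ*A^2+B^2)*t^2) = s*(2*A*B*t*s) := by
    linear_combination h1 - 2*A*B*t*hs2
  have hL : A^2*β + (γ*A^2+B^2)*t^2 = 2*A*B*t*s := mul_left_cancel₀ (ne_of_gt hs) h1'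
  have key2 : ((γ*A^2 - B^2)*t^2 + A^2*β)^2 = 0 := by
    linear_combination ((A^2*β + (γ*A^2+B^2)*t^2) + 2*A*B*t*s) * hL + 4*A^2*B^2*t^2*hs2
  exact pow_eq_zero_iff two_ne_zero |>.mp key2

/-- For the equation `u_{xt} = νe^{δu}√(β+γu_x²)` (`γ ≠ 1`, upper signs, `B ≠ 0`), the
identity `F·(Δ₂₃,_{z₁}Δ₁₂ − Δ₁₂,_{z₁}Δ₂₃) = −f₂₂(Δ₁₃² + Δ₂₃²)` cannot hold identically
on the (nonempty) set where `β + γz₁² > 0`. -/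
theorem stmt18 (δ ν γ β A B η : ℝ)
    (hδ : δ ≠ 0) (hν : ν ≠ 0) (hγ : γ ≠ 0) (hγ1 : γ ≠ 1) (hη : η ≠ 0)
    (hAB : A ^ 2 - B ^ 2 = (γ - 1) / δ ^ 2) (hB : B ≠ 0)
    (hne : ∃ z : ℝ, β + γ * z ^ 2 > 0)
    (f₁₁ f₃₁ : ℝ → ℝ) (f₁₂ f₂₂ f₃₂ : ℝ → ℝ) (F Δ₁₂ Δ₁₃ Δ₂₃ : ℝ → ℝ → ℝ)
    (hf₁₁ : f₁₁ = fun z₁ => η * A * δ - (B * z₁ - A * Real.sqrt (β + γ * z₁ ^ 2)) * δ ^ 2 / (γ - 1))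
    (hf₃₁ : f₃₁ = fun z₁ => η * B * δ - (A * z₁ - B * Real.sqrt (β + γ * z₁ ^ 2)) * δ ^ 2 / (γ - 1))
    (hf₁₂ : f₁₂ = fun z₀ => A * δ * ν * Real.exp (δ * z₀))
    (hf₂₂ : f₂₂ = fun z₀ => ν * Real.exp (δ * z₀))
    (hf₃₂ : f₃₂ = fun z₀ => B * δ * ν * Real.exp (δ * z₀))
    (hF : F = fun z₀ z₁ => ν * Real.exp (δ * z₀) * Real.sqrt (β + γ * z₁ ^ 2))
    (hΔ₁₂ : Δ₁₂ = fun z₀ z₁ => f₁₁ z₁ * f₂₂ z₀ - η * f₁₂ z₀)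
    (hΔ₁₃ : Δ₁₃ = fun z₀ z₁ => f₁₁ z₁ * f₃₂ z₀ - f₃₁ z₁ * f₁₂ z₀)
    (hΔ₂₃ : Δ₂₃ = fun z₀ z₁ => η * f₃₂ z₀ - f₃₁ z₁ * f₂₂ z₀) :
    ¬ ∀ z₀ z₁ : ℝ, β + γ * z₁ ^ 2 > 0 →
      F z₀ z₁ * (deriv (fun w => Δ₂₃ z₀ w) z₁ * Δ₁₂ z₀ z₁
          - deriv (fun w => Δ₁₂ z₀ w) z₁ * Δ₂₃ z₀ z₁)
        = -(f₂₂ z₀) * ((Δ₁₃ z₀ z₁) ^ 2 + (Δ₂₃ z₀ z₁) ^ 2) := by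
  
  intro h
  have hγ1' : γ - 1 ≠ 0 := sub_ne_zero.mpr hγ1
  have hAB' : (A^2 - B^2)*δ^2 = γ - 1 := by
    field_simp at hAB
    linarith
  have key : ∀ t : ℝ, 0 < β + γ * t ^ 2 → (γ*A^2 - B^2)*t^2 + A^2*β = 0 := by
    intro t ht
    have hspos : 0 < Real.sqrt (β + γ * t ^ 2) := Real.sqrt_pos.mpr ht
    have hs2 : Real.sqrt (β + γ * t ^ 2) ^ 2 = β + γ * t ^ 2 := Real.sq_sqrt ht.le
    have hpoly : HasDerivAt (fun w : ℝ => β + γ * w ^ 2) (γ * (2 * t)) t := by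
      simpa using ((hasDerivAt_pow 2 t).const_mul γ).const_add β
    have hsq : HasDerivAt (fun w : ℝ => Real.sqrt (β + γ * w ^ 2))
        (γ * t / Real.sqrt (β + γ * t ^ 2)) t := by
      have h0 := (Real.hasDerivAt_sqrt (ne_of_gt ht)).comp t hpoly
      refine h0.congr_deriv ?_
      field_simp
    have hd12 : HasDerivAt
        (fun w => (η * A * δ - (B * w - A * Real.sqrt (β + γ * w ^ 2)) * δ ^ 2 / (γ - 1)) * ν
          - η * (A * δ * ν))
        (-((B * 1 - A * (γ * t / Real.sqrt (β + γ * t ^ 2))) * δ ^ 2 / (γ - 1)) * ν) t := by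
      exact((((((hasDerivAt_id' t).const_mul B).sub (hsq.const_mul A)).mul_const
        (δ ^ 2)).div_const (γ - 1)).const_sub (η * A * δ)).mul_const ν |>.sub_const _
    have hd23 : HasDerivAt
        (fun w => η * (B * δ * ν)
          - (η * B * δ - (A * w - B * Real.sqrt (β + γ * w ^ 2)) * δ ^ 2 / (γ - 1)) * ν)
        (-(-((A * 1 - B * (γ * t / Real.sqrt (β + γ * t ^ 2))) * δ ^ 2 / (γ - 1)) * ν)) t := by
      exact (((((((hasDerivAt_id' t).const_mul A).sub (hsq.const_mul B)).mul_const
        (δ ^ 2)).div_const (γ - 1)).const_sub (η * B * δ)).mul_const ν).const_sub _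
    have hspec := h 0 t ht
    simp only [hΔ₁₂, hΔ₁₃, hΔ₂₃, hF, hf₁₁, hf₃₁, hf₁₂, hf₂₂, hf₃₂, mul_zero,
      Real.exp_zero, mul_one] at hspec
    rw [hd12.deriv, hd23.deriv] at hspec
    refine aux18 δ ν γ β A B η t (Real.sqrt (β + γ * t ^ 2)) (δ ^ 2 / (γ - 1))
      (γ * t / Real.sqrt (β + γ * t ^ 2)) hspos hs2 hAB' ?_ ?_ hδ hν ?_
    · field_simp
    · field_simp
    · linear_combination hspec
  obtain ⟨z, hz⟩ := hne
  have hz' : 0 < β + γ * |z| ^ 2 := by rwa [sq_abs]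
  have hopen : IsOpen {x : ℝ | 0 < β + γ * x ^ 2} := by
    exact isOpen_lt continuous_const (continuous_const.add (continuous_const.mul (continuous_pow 2)))
  obtain ⟨ε, hε, hball⟩ := Metric.isOpen_iff.mp hopen |z| hz'
  have hmem : |z| + ε / 2 ∈ Metric.ball |z| ε := by
    simp only [Metric.mem_ball, Real.dist_eq]
    rw [abs_of_pos (by linarith)]
    linarith
  have h1 := key |z| hz'
  have h2 := key (|z| + ε / 2) (hball hmem)
  have hp : (γ*A^2 - B^2) * ((|z| + ε/2)^2 - |z|^2) = 0 := by linear_combination h2 - h1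
  have hx : (|z| + ε/2)^2 - |z|^2 > 0 := by nlinarith [abs_nonneg z]
  have hp0 : γ*A^2 - B^2 = 0 := by
    rcases mul_eq_zero.mp hp with h' | h'
    · exact h'
    · linarith
  have hβ0 : A^2 * β = 0 := by linear_combination h1 - |z|^2 * hp0
  have hA : A ≠ 0 := by
    intro hA0
    apply hB
    have : B ^ 2 = 0 := by rw [hA0] at hp0; linarith [hp0]
    exact pow_eq_zero_iff two_ne_zero |>.mp this
  have h5 : (γ - 1) * (1 + A^2 * δ^2) = 0 := by
    linear_combination (-1) * hAB' + δ^2 * hp0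
  rcases mul_eq_zero.mp h5 with h' | h'
  · exact hγ1 (by linarith)
  · nlinarith [sq_nonneg (A * δ)]
end
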